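/- arXiv:1909.09849 — 2 statements merged into one kernel-verified Lean document; each statement's English description precedes it below -/
import Mathlib

section
/- Let α > 0, m ≥ 1 be a natural number, η > 0, and M_max > 0. For all x in the interval [-2·M_max, 2·M_max] with x ≠ 0, the quantity η·(1 - exp(-α·x))/(1 - exp(-α·m·x)) is bounded below by η·(exp(2·α·M_max) - 1)/(exp(2·α·m·M_max) - 1). -/
theorem alpha_rank_fixation_lower_bound
    (α : ℝ) (hα : 0 < α) (m : ℕ) (hm : 1 ≤ m) (η : ℝ) (hη : 0 < η)
    (Mmax : ℝ) (hM : 0 < Mmax) :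
    ∀ x ∈ Set.Icc (-(2 * Mmax)) (2 * Mmax), x ≠ 0 →
      η * (Real.exp (2 * α * Mmax) - 1) / (Real.exp (2 * α * m * Mmax) - 1) ≤
        η * (1 - Real.exp (-(α * x))) / (1 - Real.exp (-(α * m * x))) := by
  intro x hx hx0
  obtain ⟨hxl, hxu⟩ := hx
  set r : ℝ := Real.exp (-(α * x)) with hrdef
  set c : ℝ := Real.exp (2 * α * Mmax) with hcdef
  have hrm : Real.exp (-(α * ↑m * x)) = r ^ m := by
    rw [hrdef, ← Real.exp_nat_mul]; ring_nf
  have hcm : Real.exp (2 * α * ↑m * Mmax) = c ^ m := by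
    rw [hcdef, ← Real.exp_nat_mul]; ring_nf
  have hrpos : 0 < r := Real.exp_pos _
  have hc1 : 1 < c := by
    rw [hcdef]; exact Real.one_lt_exp_iff.mpr (by positivity)
  have hrc : r ≤ c := by
    rw [hrdef, hcdef]; apply Real.exp_le_exp.mpr; nlinarith
  have hrne1 : r ≠ 1 := by
    rw [hrdef]
    intro h
    have h0 : -(α * x) = 0 := Real.exp_injective (by rw [h, Real.exp_zero])
    have : α * x = 0 := by linarith
    rcases mul_eq_zero.mp this with h | h
    · exact absurd h (ne_of_gt hα)
    · exact hx0 h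
  set T : ℝ := ∑ k ∈ Finset.range m, r ^ k with hTdef
  set S : ℝ := ∑ k ∈ Finset.range m, c ^ k with hSdef
  have hTpos : 0 < T := by
    apply Finset.sum_pos (fun k _ => pow_pos hrpos k)
    exact Finset.nonempty_range_iff.mpr (by omega)
  have hTS : T ≤ S :=
    Finset.sum_le_sum fun k _ => pow_le_pow_left₀ hrpos.le hrc k
  have hSpos : 0 < S := lt_of_lt_of_le hTpos hTS
  have hfacr : 1 - r ^ m = (1 - r) * T := by
    have := geom_sum_mul r m
    rw [hTdef]; nlinarith [this]
  have hfacc : c ^ m - 1 = (c - 1) * S := by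
    have := geom_sum_mul c m
    rw [hSdef]; linarith
  rw [hrm, hcm, hfacr, hfacc]
  have h1 : η * (c - 1) / ((c - 1) * S) = η / S := by
    rw [mul_comm η (c - 1), mul_div_mul_left _ _ (by linarith : c - 1 ≠ 0)]
  have h2 : η * (1 - r) / ((1 - r) * T) = η / T := by
    rw [mul_comm η (1 - r), mul_div_mul_left _ _ (sub_ne_zero.mpr (Ne.symm hrne1))]
  rw [h1, h2]
  exact div_le_div_of_nonneg_left hη.le hTpos hTS
end

section
/- Let α > 0, m ≥ 1 a natural number, η > 0, M_max > 0. For all x in [-2·M_max, 2·M_max] with x ≠ 0, we have η·(1 - exp(-α·x))/(1 - exp(-α·m·x)) ≤ η·(1 - exp(-2·α·M_max))/(1 - exp(-2·α·m·M_max)). -/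
theorem alpha_rank_fixation_upper_bound
    (α : ℝ) (hα : 0 < α) (m : ℕ) (hm : 1 ≤ m) (η : ℝ) (hη : 0 < η)
    (Mmax : ℝ) (hM : 0 < Mmax) :
    ∀ x ∈ Set.Icc (-(2 * Mmax)) (2 * Mmax), x ≠ 0 →
      η * (1 - Real.exp (-(α * x))) / (1 - Real.exp (-(α * m * x))) ≤
        η * (1 - Real.exp (-(2 * α * Mmax))) / (1 - Real.exp (-(2 * α * m * Mmax))) := by
  rintro x ⟨hx1, hx2⟩ hx0
  set t := Real.exp (-(α * x)) with ht
  set t0 := Real.exp (-(2 * α * Mmax)) with ht0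
  have ht0pos : 0 < t0 := Real.exp_pos _
  have htt0 : t0 ≤ t := Real.exp_le_exp.mpr (by nlinarith)
  have key : ∀ s : ℝ, 1 - s ^ m = (1 - s) * ∑ k ∈ Finset.range m, s ^ k := by
    intro s
    linear_combination geom_sum_mul s m
  have h1 : Real.exp (-(α * m * x)) = t ^ m := by
    rw [ht, ← Real.exp_nat_mul]; congr 1; ring
  have h2 : Real.exp (-(2 * α * m * Mmax)) = t0 ^ m := by
    rw [ht0, ← Real.exp_nat_mul]; congr 1; ring
  have ht1 : t ≠ 1 := by
    rw [ht, Ne, Real.exp_eq_one_iff]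
    intro h
    exact hx0 (by nlinarith)
  have ht01 : t0 ≠ 1 := by
    rw [ht0, Ne, Real.exp_eq_one_iff]
    nlinarith
  have hS0 : 0 < ∑ k ∈ Finset.range m, t0 ^ k :=
    Finset.sum_pos (fun k _ => pow_pos ht0pos k) (by simp; omega)
  have hSS : ∑ k ∈ Finset.range m, t0 ^ k ≤ ∑ k ∈ Finset.range m, t ^ k :=
    Finset.sum_le_sum fun k _ => pow_le_pow_left₀ ht0pos.le htt0 k
  rw [h1, h2, key t, key t0, show η * (1 - t) = (1 - t) * η by ring,
    show η * (1 - t0) = (1 - t0) * η by ring,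
    mul_div_mul_left _ _ (sub_ne_zero.mpr ht1.symm),
    mul_div_mul_left _ _ (sub_ne_zero.mpr ht01.symm)]
  gcongr
end
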